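/- The Burden-based semantics satisfies Cardinality Precedence: for every finite argumentation framework F = ⟨A,R⟩ and all a,b ∈ A, if |Att₁(a)| < |Att₁(b)| then a ≻^{Bbs} b, i.e., the Burden number vector of a is lexicographically strictly smaller than that of b. -/
import Mathlib


/-- An abstract argumentation framework: a finite set of arguments together with
an attack relation between them. -/
structure AF where
  args : Finset ℕ
  att : Finset (ℕ × ℕ)
  att_mem : ∀ p ∈ att, p.1 ∈ args ∧ p.2 ∈ args

namespace AF

/-- The direct attackers of an argument. -/
def attackers (F : AF) (a : ℕ) : Finset ℕ :=
  F.args.filter (fun b => (b, a) ∈ F.att)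

end AF

namespace AF

/-- The Burden numbers: `Bur₀(a) = 1` and
`Bur_i(a) = 1 + Σ_{b ∈ Att₁(a)} 1 / Bur_{i-1}(b)`. -/
noncomputable def bur (F : AF) : ℕ → ℕ → ℝ
  | 0, _ => 1
  | i + 1, a => 1 + ∑ b ∈ F.attackers a, 1 / F.bur i b

end AF

/-- Strict lexicographic comparison of real sequences. -/
def lexLTR (u v : ℕ → ℝ) : Prop := ∃ i, u i < v i ∧ ∀ j < i, u j = v j

/-- The Burden-based semantics satisfies Cardinality Precedence: more direct
attackers means a lexicographically strictly greater Burden vector, i.e. a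
strictly lower rank. -/
theorem bbs_cp (F : AF) :
    ∀ a ∈ F.args, ∀ b ∈ F.args,
      (F.attackers a).card < (F.attackers b).card →
      lexLTR (fun i => F.bur i a) (fun i => F.bur i b) := by
  intro a _ b _ h
  have key : ∀ x, F.bur 1 x = 1 + (F.attackers x).card := by
    intro x
    simp [AF.bur]
  refine ⟨1, ?_, ?_⟩
  · simp only [key]
    have := (Nat.cast_lt (α := ℝ)).2 h
    linarith
  · intro j hj
    interval_cases j
    simp [AF.bur]
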